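/- arXiv:2203.08651 — 2 statements merged into one kernel-verified Lean document; each statement's English description precedes it below -/
import Mathlib

section
/- Let φ ∈ 𝒫 and define F(q) := ∫₁^q ds/φ(s) for q > 0. Let t₀ ∈ ℝ, (tᵢ) be an impulse time sequence, and let v: [t₀,∞) → (0,∞) be impulsive-regular with D⁺v(t) ≤ −φ(v(t)) at every non-impulse time t and v(tᵢ) ≤ v(tᵢ⁻) at every impulse time tᵢ. Then F(v(t)) ≤ F(v(t₀)) − (t − t₀) for all t ≥ t₀. -/
open Filter Topology Set MeasureTheory

noncomputable section

/-- Class 𝒦: continuous, strictly increasing on `[0,∞)`, vanishing at `0`. -/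
def ClassK (γ : ℝ → ℝ) : Prop :=
  ContinuousOn γ (Set.Ici 0) ∧ StrictMonoOn γ (Set.Ici 0) ∧ γ 0 = 0

/-- Class 𝒦∞: class 𝒦 and unbounded. -/
def ClassKInf (γ : ℝ → ℝ) : Prop :=
  ClassK γ ∧ Filter.Tendsto γ Filter.atTop Filter.atTop

/-- Class 𝒦ℒ. -/
def ClassKL (β : ℝ → ℝ → ℝ) : Prop :=
  (∀ s, 0 ≤ s → ClassK (fun r => β r s)) ∧
  (∀ r, 0 ≤ r → AntitoneOn (fun s => β r s) (Set.Ici 0) ∧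
    Filter.Tendsto (fun s => β r s) Filter.atTop (nhds 0))

/-- Class 𝒫: continuous, positive definite. -/
def ClassP (φ : ℝ → ℝ) : Prop :=
  ContinuousOn φ (Set.Ici 0) ∧ φ 0 = 0 ∧ ∀ r, 0 < r → 0 < φ r

/-- Upper right Dini derivative `D⁺v(t) = limsup_{s→0⁺} (v(t+s) − v(t))/s`, valued in `EReal`. -/
def DiniUpper (v : ℝ → ℝ) (t : ℝ) : EReal :=
  Filter.limsup (fun s => (((v (t + s) - v t) / s : ℝ) : EReal)) (nhdsWithin 0 (Set.Ioi 0))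

/-- Impulse time sequence with initial time `t₀ = τ 0`: strictly increasing and tending to `∞`;
the impulse times are `τ i` for `i ≥ 1`. -/
def IsImpulseSeq (t₀ : ℝ) (τ : ℕ → ℝ) : Prop :=
  τ 0 = t₀ ∧ StrictMono τ ∧ Filter.Tendsto τ Filter.atTop Filter.atTop

/-- The set `S = {tᵢ : i ≥ 1}` of impulse times. -/
def impulseSet (τ : ℕ → ℝ) : Set ℝ := {s | ∃ i : ℕ, 1 ≤ i ∧ τ i = s}

/-- Impulsive-regular function on `[t₀,∞)`: right-continuous everywhere, continuous (within
`[t₀,∞)`) at every non-impulse time, and left limits exist at every impulse time. -/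
def ImpulsiveRegular (t₀ : ℝ) (τ : ℕ → ℝ) (v : ℝ → ℝ) : Prop :=
  (∀ t, t₀ ≤ t → ContinuousWithinAt v (Set.Ici t) t) ∧
  (∀ t, t₀ ≤ t → t ∉ impulseSet τ → ContinuousWithinAt v (Set.Ici t₀) t) ∧
  (∀ i : ℕ, 1 ≤ i → ∃ L : ℝ, Filter.Tendsto v (nhdsWithin (τ i) (Set.Iio (τ i))) (nhds L))

/-! Write `F = invPrimitive φ`, so `F' = 1/φ`. Away from the impulse times the chain rule gives
`D⁺(F ∘ v) ≤ F'(v) · (-φ(v)) = -1`, and a Gronwall-type comparison on a closed inter-impulse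
interval `[tₙ, tₙ₊₁]`, where `v` is made continuous by assigning it its left limit at `tₙ₊₁`,
yields `F(v(t)) ≤ F(v(tₙ)) - (t - tₙ)`. Jumps are downward and `F` is increasing, so these
estimates chain across the impulse times. -/

open Function

theorem eventually_slope_lt_of_diniUpper_lt {u : ℝ → ℝ} {x m : ℝ} (h : DiniUpper u x < m) :
    ∀ᶠ z in 𝓝[>] x, slope u x z < m := by
  rw [show 𝓝[>] x = map (x + ·) (𝓝[>] 0) by simp, eventually_map]
  filter_upwards [eventually_lt_of_limsup_lt h] with s hs
  rw [slope_def_field, add_sub_cancel_left]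
  exact_mod_cast hs

theorem Filter.EventuallyEq.diniUpper_eq {u w : ℝ → ℝ} {x : ℝ} (h : u =ᶠ[𝓝 x] w) :
    DiniUpper u x = DiniUpper w x := by
  have hx : Tendsto (x + ·) (𝓝[>] (0 : ℝ)) (𝓝 x) := by
    simpa using ((continuous_const_add x).tendsto 0).mono_left nhdsWithin_le_nhds
  refine limsup_congr ((hx.eventually h).mono fun s hs => ?_)
  rw [hs, h.eq_of_nhds]

/-- Chain rule for the upper right Dini derivative: `D⁺(F ∘ u)(x) ≤ F'(u x) · D⁺u(x)`. -/
theorem eventually_slope_comp_lt {F u : ℝ → ℝ} {x F' m r : ℝ} (hF : HasDerivAt F F' (u x))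
    (hF' : 0 < F') (hu : Tendsto u (𝓝[>] x) (𝓝 (u x))) (hd : DiniUpper u x ≤ m)
    (hr : F' * m < r) : ∀ᶠ z in 𝓝[>] x, slope (F ∘ u) x z < r := by
  obtain ⟨m', hmm', hm'r⟩ := exists_between ((lt_div_iff₀' hF').2 hr)
  -- the difference quotient of `F` at `u x`, made continuous there
  set G := update (slope F (u x)) (u x) F'
  have hG : Tendsto (G ∘ u) (𝓝[>] x) (𝓝 F') := by
    simpa [G] using (continuousAt_update_same.2 (hasDerivAt_iff_tendsto_slope.1 hF)).tendsto.comp hu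
  have hFG : ∀ z, F (u z) - F (u x) = G (u z) * (u z - u x) := by
    intro z
    by_cases h : u z = u x
    · simp [h]
    · rw [show G (u z) = slope F (u x) (u z) from update_of_ne h _ _, slope_def_field,
        div_mul_cancel₀ _ (sub_ne_zero.2 h)]
  filter_upwards [eventually_slope_lt_of_diniUpper_lt (hd.trans_lt (EReal.coe_lt_coe_iff.2 hmm')),
    hG.eventually (lt_mem_nhds hF'),
    (hG.mul_const m').eventually (gt_mem_nhds ((lt_div_iff₀' hF').1 hm'r))] with z hq hpos hlt
  calc slope (F ∘ u) x z = G (u z) * slope u x z := by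
        rw [slope_def_field, slope_def_field, comp_apply, comp_apply, hFG, mul_div_assoc]
    _ ≤ G (u z) * m' := mul_le_mul_of_nonneg_left hq.le hpos.le
    _ < r := hlt

theorem image_le_of_liminf_slope_right_le_Ioo {f : ℝ → ℝ} {a b c : ℝ} (hab : a ≤ b)
    (hf : ContinuousOn f (Icc a b))
    (bound : ∀ x ∈ Ioo a b, ∀ r, c < r → ∃ᶠ z in 𝓝[>] x, slope f x z < r) :
    f b ≤ f a + c * (b - a) := by
  rcases hab.eq_or_lt with rfl | hab
  · simp
  have key : ∀ a' ∈ Ioo a b, f b ≤ f a' + c * (b - a') := fun a' ha' =>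
    image_le_of_liminf_slope_right_le_deriv_boundary (hf.mono (Icc_subset_Icc_left ha'.1.le))
      (B := fun x => f a' + c * (x - a')) (by simp) (by fun_prop)
      (fun x _ => by simpa using (((hasDerivAt_id x).sub_const a').const_mul c).const_add (f a')
        |>.hasDerivWithinAt)
      (fun x hx => bound x ⟨ha'.1.trans_le hx.1, hx.2⟩) ⟨ha'.2.le, le_rfl⟩
  have hlim : Tendsto (fun a' => f a' + c * (b - a')) (𝓝[Ioo a b] a) (𝓝 (f a + c * (b - a))) :=
    ((hf a (left_mem_Icc.2 hab.le)).mono Ioo_subset_Icc_self).tendsto.add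
      (((continuous_const.mul (continuous_const.sub continuous_id)).tendsto a).mono_left
        nhdsWithin_le_nhds)
  have : (𝓝[Ioo a b] a).NeBot := by rw [nhdsWithin_Ioo_eq_nhdsGT hab]; infer_instance
  exact ge_of_tendsto hlim (eventually_mem_nhdsWithin.mono key)

def invPrimitive (φ : ℝ → ℝ) (q : ℝ) : ℝ := ∫ s in (1 : ℝ)..q, (φ s)⁻¹

theorem hasDerivAt_invPrimitive {φ : ℝ → ℝ} (hφc : ContinuousOn φ (Ioi 0))
    (hφpos : ∀ r, 0 < r → 0 < φ r) {q : ℝ} (hq : 0 < q) :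
    HasDerivAt (invPrimitive φ) (φ q)⁻¹ q := by
  have hinv : ContinuousOn (fun s => (φ s)⁻¹) (Ioi 0) := hφc.inv₀ fun s hs => (hφpos s hs).ne'
  refine intervalIntegral.integral_hasDerivAt_right ?_
    (hinv.stronglyMeasurableAtFilter isOpen_Ioi q hq) (hinv.continuousAt (Ioi_mem_nhds hq))
  exact (hinv.mono fun s hs => (lt_min one_pos hq).trans_le hs.1).intervalIntegrable

theorem monotoneOn_invPrimitive {φ : ℝ → ℝ} (hφc : ContinuousOn φ (Ioi 0))
    (hφpos : ∀ r, 0 < r → 0 < φ r) : MonotoneOn (invPrimitive φ) (Ioi 0) := by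
  have hF := fun q (hq : q ∈ Ioi (0 : ℝ)) => hasDerivAt_invPrimitive hφc hφpos hq
  refine monotoneOn_of_hasDerivWithinAt_nonneg (f' := fun q => (φ q)⁻¹) (convex_Ioi 0)
    (fun q hq => (hF q hq).continuousAt.continuousWithinAt) ?_ ?_ <;> rw [interior_Ioi]
  · exact fun q hq => (hF q hq).hasDerivWithinAt
  · exact fun q hq => (inv_pos.2 (hφpos q hq)).le

theorem invPrimitive_comp_le_of_diniUpper_le {φ w : ℝ → ℝ} (hφc : ContinuousOn φ (Ioi 0))
    (hφpos : ∀ r, 0 < r → 0 < φ r) {a b : ℝ} (hab : a ≤ b) (hw : ContinuousOn w (Icc a b))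
    (hwpos : ∀ x ∈ Icc a b, 0 < w x)
    (hd : ∀ x ∈ Ioo a b, DiniUpper w x ≤ ((-φ (w x) : ℝ) : EReal)) :
    invPrimitive φ (w b) ≤ invPrimitive φ (w a) - (b - a) := by
  have hF := fun x hx => hasDerivAt_invPrimitive hφc hφpos (hwpos x hx)
  have key := image_le_of_liminf_slope_right_le_Ioo (f := invPrimitive φ ∘ w) (c := -1) hab
    (fun x hx => (hF x hx).continuousAt.comp_continuousWithinAt (hw x hx)) fun x hx r hr => by
      have hx' := Ioo_subset_Icc_self hx
      refine (eventually_slope_comp_lt (hF x hx') (inv_pos.2 (hφpos _ (hwpos x hx')))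
        ((hw x hx').tendsto.mono_left (nhdsWithin_le_of_mem
          (Icc_mem_nhdsGT_of_mem ⟨hx.1.le, hx.2⟩))) (hd x hx) ?_).frequently
      rwa [mul_neg, inv_mul_cancel₀ (hφpos _ (hwpos x hx')).ne']
  simpa [sub_eq_add_neg] using key

theorem exists_mem_Ico_of_tendsto_atTop {τ : ℕ → ℝ} (htop : Tendsto τ atTop atTop) {t : ℝ}
    (ht : τ 0 ≤ t) : ∃ n, t ∈ Ico (τ n) (τ (n + 1)) := by
  by_contra! h
  have hle : ∀ n, τ n ≤ t := fun n =>
    Nat.rec ht (fun n ih => le_of_not_gt fun hlt => h n ⟨ih, hlt⟩) n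
  obtain ⟨n, hn⟩ := (htop.eventually_gt_atTop t).exists
  exact (hle n).not_gt hn

theorem continuousOn_update_Icc {v : ℝ → ℝ} {a b L : ℝ} (hv : ContinuousOn v (Ico a b))
    (hL : Tendsto v (𝓝[<] b) (𝓝 L)) : ContinuousOn (update v b L) (Icc a b) := by
  intro x hx
  rcases hx.2.eq_or_lt with rfl | hxb
  · rw [continuousWithinAt_update_same]
    exact hL.mono_left (nhdsWithin_mono _ fun z hz => lt_of_le_of_ne hz.1.2 hz.2)
  · rw [continuousWithinAt_update_of_ne hxb.ne]
    exact (hv x ⟨hx.1, hxb⟩).mono_of_mem_nhdsWithin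
      (mem_nhdsWithin.2 ⟨Iio b, isOpen_Iio, hxb, fun z hz => ⟨hz.2.1, hz.1⟩⟩)

theorem notMem_impulseSet_of_mem_Ioo {τ : ℕ → ℝ} (hτ : StrictMono τ) {n : ℕ} {x : ℝ}
    (hx : x ∈ Ioo (τ n) (τ (n + 1))) : x ∉ impulseSet τ := by
  rintro ⟨i, -, rfl⟩
  have h1 := hτ.lt_iff_lt.1 hx.1
  have h2 := hτ.lt_iff_lt.1 hx.2
  omega

namespace ImpulsiveRegular

variable {t₀ : ℝ} {τ : ℕ → ℝ} {v : ℝ → ℝ}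

theorem continuousOn_Ico (hreg : ImpulsiveRegular t₀ τ v) (hτ : StrictMono τ) {n : ℕ}
    (hn : t₀ ≤ τ n) : ContinuousOn v (Ico (τ n) (τ (n + 1))) := by
  intro x hx
  rcases hx.1.eq_or_lt with rfl | hlt
  · exact (hreg.1 _ hn).mono Ico_subset_Ici_self
  · exact (hreg.2.1 x (hn.trans hx.1) (notMem_impulseSet_of_mem_Ioo hτ ⟨hlt, hx.2⟩)).mono
      fun z hz => hn.trans hz.1

theorem invPrimitive_le_of_mem_Icc {φ : ℝ → ℝ} (hφc : ContinuousOn φ (Ioi 0))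
    (hφpos : ∀ r, 0 < r → 0 < φ r) (hreg : ImpulsiveRegular t₀ τ v) (hτ : StrictMono τ) {n : ℕ}
    (hn : t₀ ≤ τ n) (hvpos : ∀ t, t₀ ≤ t → 0 < v t)
    (hflow : ∀ t, t₀ ≤ t → t ∉ impulseSet τ → DiniUpper v t ≤ (((-φ (v t)) : ℝ) : EReal))
    (hjump : v (τ (n + 1)) ≤ leftLim v (τ (n + 1))) :
    ∀ t ∈ Icc (τ n) (τ (n + 1)), invPrimitive φ (v t) ≤ invPrimitive φ (v (τ n)) - (t - τ n) := by
  obtain ⟨L, hL⟩ := hreg.2.2 (n + 1) (Nat.le_add_left 1 n)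
  rw [leftLim_eq_of_tendsto hL] at hjump
  set w := update v (τ (n + 1)) L
  have hw_eq : ∀ x, x < τ (n + 1) → w x = v x := fun x hx => update_of_ne hx.ne _ _
  have hvw : ∀ x ∈ Icc (τ n) (τ (n + 1)), v x ≤ w x := fun x hx => by
    rcases hx.2.eq_or_lt with rfl | hx
    · simpa [w] using hjump
    · exact (hw_eq x hx).ge
  have hwpos : ∀ x ∈ Icc (τ n) (τ (n + 1)), 0 < w x := fun x hx =>
    (hvpos x (hn.trans hx.1)).trans_le (hvw x hx)
  have hw := continuousOn_update_Icc (hreg.continuousOn_Ico hτ hn) hL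
  intro t ht
  have hdini : ∀ x ∈ Ioo (τ n) t, DiniUpper w x ≤ ((-φ (w x) : ℝ) : EReal) := fun x hx => by
    have hxb : x < τ (n + 1) := hx.2.trans_le ht.2
    have hloc : w =ᶠ[𝓝 x] v := (eventually_lt_nhds hxb).mono hw_eq
    rw [hloc.diniUpper_eq, hw_eq x hxb]
    exact hflow x (hn.trans hx.1.le) (notMem_impulseSet_of_mem_Ioo hτ ⟨hx.1, hxb⟩)
  calc invPrimitive φ (v t) ≤ invPrimitive φ (w t) :=
        monotoneOn_invPrimitive hφc hφpos (hvpos t (hn.trans ht.1)) (hwpos t ht) (hvw t ht)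
    _ ≤ invPrimitive φ (w (τ n)) - (t - τ n) :=
        invPrimitive_comp_le_of_diniUpper_le hφc hφpos ht.1 (hw.mono (Icc_subset_Icc_right ht.2))
          (fun x hx => hwpos x ⟨hx.1, hx.2.trans ht.2⟩) hdini
    _ = invPrimitive φ (v (τ n)) - (t - τ n) := by rw [hw_eq _ (hτ n.lt_succ_self)]

end ImpulsiveRegular

/-- decay estimate `F(v(t)) ≤ F(v(t₀)) − (t − t₀)` along an impulsive trajectory
with strictly decaying flow (`D⁺v ≤ −φ(v)`) and non-increasing jumps, where
`F(q) = ∫₁^q ds/φ(s)`. -/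
theorem decayEstimate
    (φ : ℝ → ℝ) (hφ : ClassP φ)
    (t₀ : ℝ) (τ : ℕ → ℝ) (hτ : IsImpulseSeq t₀ τ)
    (v : ℝ → ℝ) (hvpos : ∀ t, t₀ ≤ t → 0 < v t)
    (hreg : ImpulsiveRegular t₀ τ v)
    (hflow : ∀ t, t₀ ≤ t → t ∉ impulseSet τ →
      DiniUpper v t ≤ (((-φ (v t)) : ℝ) : EReal))
    (hjump : ∀ i : ℕ, 1 ≤ i → v (τ i) ≤ Function.leftLim v (τ i)) :
    ∀ t, t₀ ≤ t →
      (∫ s in (1:ℝ)..(v t), (φ s)⁻¹) ≤ (∫ s in (1:ℝ)..(v t₀), (φ s)⁻¹) - (t - t₀) := by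
  obtain ⟨hτ0, hτ, htop⟩ := hτ
  have hφc : ContinuousOn φ (Ioi 0) := hφ.1.mono Ioi_subset_Ici_self
  have hpiece (n : ℕ) := hreg.invPrimitive_le_of_mem_Icc hφc hφ.2.2 hτ
    (hτ0 ▸ hτ.monotone n.zero_le) hvpos hflow (hjump (n + 1) (Nat.le_add_left 1 n))
  have hnodes (n : ℕ) : invPrimitive φ (v (τ n)) ≤ invPrimitive φ (v t₀) - (τ n - t₀) := by
    induction n with
    | zero => simp [hτ0]
    | succ n ih => linarith [hpiece n (τ (n + 1)) ⟨(hτ n.lt_succ_self).le, le_rfl⟩]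
  intro t ht
  obtain ⟨n, hn⟩ := exists_mem_Ico_of_tendsto_atTop htop (hτ0 ▸ ht)
  show invPrimitive φ (v t) ≤ invPrimitive φ (v t₀) - (t - t₀)
  linarith [hpiece n t (Ico_subset_Icc_self hn), hnodes n]
end
end

section
/- Let ρ: [0,∞) → ℝ satisfy −ρ ∈ 𝒫 and ∫₀¹ ds/(−ρ(s)) = ∞, let α ∈ 𝒦∞ and θ, δ > 0 with ∫_{α(a)}^a ds/(−ρ(s)) ≥ θ + δ for all a > 0. Set F̃(q) := ∫₁^q ds/(−ρ(s)) for q > 0, a strictly increasing continuous bijection from (0,∞) onto (−∞, M̃) with M̃ := lim_{q→∞} F̃(q) ∈ (0,∞]. Let ψ₁, ψ₂, η ∈ 𝒦∞, ψ₃ ∈ 𝒦, X a real normed space, t₀ ∈ ℝ, (tᵢ) an impulse time sequence with t_{i+1} − tᵢ ≤ θ for all i ≥ 0, and r ≥ 0. Let V_cand: X → [0,∞) be continuous with ψ₁(‖y‖) ≤ V_cand(y) ≤ ψ₂(‖y‖), and let x: [t₀,∞) → X be such that w(t) := V_cand(x(t)) is impulsive-regular and satisfies: D⁺w(t) ≤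 −ρ(w(t)) at non-impulse times with w(t) ≥ η(r); w(tᵢ) ≤ α(w(tᵢ⁻)) at impulse times with w(tᵢ⁻) ≥ η(r); and w(tᵢ) ≤ ψ₃(r) at impulse times with w(tᵢ⁻) < η(r). Define V(t,y) := F̃⁻¹( F̃(V_cand(y)) − ((t − tᵢ)/(t_{i+1} − tᵢ))(θ + δ) ) for t ∈ [tᵢ, t_{i+1}) (i ≥ 0) and V_cand(y) > 0, and V(t,y) := 0 when V_cand(y) = 0. Then: (i) there exist α₁, α₂ ∈ 𝒦∞ with α₁(‖y‖) ≤ V(t,y) ≤ α₂(‖y‖) for all t, y (one may take α₂ = ψ₂ and α₁(s) := F̃⁻¹(F̃(ψ₁(s)) − (θ + δ)) for s > 0, α₁(0) := 0); (ii) at every non-impulse time t with V(t,x(t)) ≥ η(r): D⁺[V(t,x(t))] ≤ −(δ/θ)(−ρ)(V(t,x(t))), and at every impulse time with V(tᵢ⁻,x(tᵢ⁻)) ≥ η(r): V(tᵢ,x(tᵢ)) ≤ V(tᵢ⁻,x(tᵢ⁻)) (left limits of the impulsive-regular map t ↦ V(t,x(t))); (iii) at every impulse time with V(tᵢ⁻,x(tᵢ⁻))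 < η(r): V(tᵢ,x(tᵢ)) ≤ max{ψ₃(r), η(r)}. -/
/-!
`F̃` is a time coordinate for `ẇ = -ρ(w)`: `F̃' = 1/(-ρ)`, so along the trajectory `F̃(w)` grows
at most at unit speed between impulses. Subtracting the ramp `(t - tᵢ)/(tᵢ₊₁ - tᵢ) · (θ + δ)`,
whose slope is at least `(θ + δ)/θ` by the dwell-time bound, makes `F̃(V)` decrease at rate `δ/θ`,
and `F̃⁻¹` (with derivative `-ρ ∘ F̃⁻¹`) turns this into the decay of `V`. At an impulse the ramp
drops from `θ + δ` back to `0`, which the jump condition `F̃(α a) ≤ F̃(a) - (θ + δ)` absorbs.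
The divergence of `∫₀ 1/(-ρ)` and the same jump condition make `F̃` a bijection `(0, ∞) → ℝ`, so
`F̃⁻¹` is defined and differentiable everywhere.
-/

open Filter Topology Set MeasureTheory

noncomputable section

lemma ClassK.nonneg {γ : ℝ → ℝ} (hγ : ClassK γ) {s : ℝ} (hs : 0 ≤ s) : 0 ≤ γ s :=
  hγ.2.2 ▸ hγ.2.1.monotoneOn self_mem_Ici hs hs

lemma ClassK.pos {γ : ℝ → ℝ} (hγ : ClassK γ) {s : ℝ} (hs : 0 < s) : 0 < γ s :=
  hγ.2.2 ▸ hγ.2.1 self_mem_Ici hs.le hs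

lemma ClassP.nonneg {φ : ℝ → ℝ} (hφ : ClassP φ) {s : ℝ} (hs : 0 ≤ s) : 0 ≤ φ s := by
  rcases hs.eq_or_lt with rfl | hs
  · exact hφ.2.1.ge
  · exact (hφ.2.2 s hs).le

lemma IsImpulseSeq.exists_mem_Ico {t₀ t : ℝ} {τ : ℕ → ℝ} (hτ : IsImpulseSeq t₀ τ)
    (ht : t₀ ≤ t) : ∃ i, τ i ≤ t ∧ t < τ (i + 1) := by
  have hex : ∃ n, t < τ n := (hτ.2.2.eventually_gt_atTop t).exists
  obtain ⟨j, hj⟩ : ∃ j, Nat.find hex = j + 1 :=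
    Nat.exists_eq_add_one.2 <| Nat.pos_of_ne_zero fun h =>
      (Nat.find_spec hex).not_ge (by rw [h, hτ.1]; exact ht)
  exact ⟨j, not_lt.1 (Nat.find_min hex (by omega)), hj ▸ Nat.find_spec hex⟩

def ramp (τ : ℕ → ℝ) (i : ℕ) (t : ℝ) : ℝ := (t - τ i) / (τ (i + 1) - τ i)

lemma one_sub_div_le_neg_div {θ δ Δ : ℝ} (hθ : 0 < θ) (hθδ : 0 ≤ θ + δ) (hΔ : 0 < Δ)
    (hΔθ : Δ ≤ θ) : 1 - (θ + δ) / Δ ≤ -(δ / θ) := by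
  have := div_le_div_of_nonneg_left hθδ hΔ hΔθ
  rw [add_div, div_self hθ.ne'] at this
  linarith

section Ramp

variable {τ : ℕ → ℝ} {i : ℕ} {t : ℝ}

lemma ramp_nonneg (h₁ : τ i ≤ t) (h₂ : t < τ (i + 1)) : 0 ≤ ramp τ i t :=
  div_nonneg (sub_nonneg.2 h₁) (by linarith)

lemma ramp_lt_one (h₁ : τ i ≤ t) (h₂ : t < τ (i + 1)) : ramp τ i t < 1 :=
  (div_lt_one (by linarith)).2 (by linarith)

lemma ramp_self (τ : ℕ → ℝ) (i : ℕ) : ramp τ i (τ i) = 0 := by simp [ramp]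

lemma ramp_succ (h : τ i < τ (i + 1)) : ramp τ i (τ (i + 1)) = 1 :=
  div_self (sub_pos.2 h).ne'

lemma continuous_ramp (τ : ℕ → ℝ) (i : ℕ) : Continuous (ramp τ i) :=
  (continuous_id.sub continuous_const).div_const _

lemma hasDerivAt_ramp_mul (τ : ℕ → ℝ) (i : ℕ) (t c : ℝ) :
    HasDerivAt (fun u => ramp τ i u * c) (c / (τ (i + 1) - τ i)) t :=
  ((((hasDerivAt_id' t).sub_const (τ i)).div_const (τ (i + 1) - τ i)).mul_const c).congr_deriv
    (by ring)

end Ramp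

section DiniUpper

variable {f g : ℝ → ℝ} {t : ℝ}

lemma tendsto_add_nhdsGT_zero (t : ℝ) : Tendsto (t + ·) (𝓝[>] 0) (𝓝[>] t) := by
  refine tendsto_nhdsWithin_of_tendsto_nhds_of_eventually_within _ ?_ ?_
  · simpa using ((continuous_const_add t).tendsto 0).mono_left nhdsWithin_le_nhds
  · filter_upwards [self_mem_nhdsWithin] with s (hs : 0 < s)
    exact lt_add_of_pos_right t hs

lemma HasDerivAt.tendsto_slope_nhdsGT_zero {f' : ℝ} (hf : HasDerivAt f f' t) :
    Tendsto (fun s => (f (t + s) - f t) / s) (𝓝[>] 0) (𝓝 f') := by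
  simpa [div_eq_inv_mul] using
    (hasDerivAt_iff_tendsto_slope_zero.1 hf).mono_left
      (nhdsWithin_mono 0 fun s (hs : s ∈ Ioi 0) => hs.ne')

lemma diniUpper_le_diniUpper (h₀ : f t = g t) (h : ∀ᶠ u in 𝓝[>] t, f u ≤ g u) :
    DiniUpper f t ≤ DiniUpper g t := by
  refine limsup_le_limsup ?_
  filter_upwards [tendsto_add_nhdsGT_zero t h, self_mem_nhdsWithin] with s hs (hs₀ : 0 < s)
  rw [h₀]
  exact EReal.coe_le_coe_iff.2 (div_le_div_of_nonneg_right (sub_le_sub_right hs _) hs₀.le)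

lemma diniUpper_le_of_forall_eventually {C : ℝ}
    (h : ∀ ε > 0, ∀ᶠ s in 𝓝[>] 0, (f (t + s) - f t) / s ≤ C + ε) : DiniUpper f t ≤ C := by
  refine EReal.le_of_forall_lt_iff_le.1 fun z hz => limsup_le_of_le (by isBoundedDefault) ?_
  filter_upwards [h _ (sub_pos.2 (EReal.coe_lt_coe_iff.1 hz))] with s hs
  exact EReal.coe_le_coe_iff.2 (by linarith)

lemma eventually_le_of_diniUpper_le {C ε : ℝ} (h : DiniUpper f t ≤ C) (hε : 0 < ε) :
    ∀ᶠ s in 𝓝[>] 0, (f (t + s) - f t) / s ≤ C + ε := by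
  filter_upwards [eventually_lt_of_limsup_lt
    (h.trans_lt (EReal.coe_lt_coe_iff.2 (lt_add_of_pos_right C hε)))] with s hs
  exact (EReal.coe_lt_coe_iff.1 hs).le

lemma diniUpper_sub_le {k : ℝ → ℝ} {L κ : ℝ} (h : DiniUpper f t ≤ L) (hk : HasDerivAt k κ t) :
    DiniUpper (fun u => f u - k u) t ≤ (L - κ : ℝ) := by
  refine diniUpper_le_of_forall_eventually fun ε hε => ?_
  filter_upwards [eventually_le_of_diniUpper_le h (half_pos hε),
    hk.tendsto_slope_nhdsGT_zero.eventually (eventually_gt_nhds (sub_lt_self κ (half_pos hε)))]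
    with s hf hk
  rw [sub_sub_sub_comm, sub_div]
  linarith

lemma HasDerivAt.diniUpper_comp_le {φ : ℝ → ℝ} {M L : ℝ} (hφ : HasDerivAt φ M (g t))
    (hM : 0 < M) (hg : ContinuousWithinAt g (Ici t) t) (h : DiniUpper g t ≤ L) :
    DiniUpper (fun u => φ (g u)) t ≤ (M * L : ℝ) := by
  classical
  -- Carathéodory's form of the derivative: `φ y - φ (g t) = σ y * (y - g t)`, `σ` continuous.
  set σ := Function.update (slope φ (g t)) (g t) M
  have hσ : Tendsto (fun s => σ (g (t + s))) (𝓝[>] 0) (𝓝 M) := by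
    have hσc : ContinuousAt σ (g t) :=
      continuousAt_update_same.2 (hasDerivAt_iff_tendsto_slope.1 hφ)
    have := hσc.tendsto.comp (hg.tendsto.comp
      ((tendsto_add_nhdsGT_zero t).mono_right (nhdsWithin_mono _ Ioi_subset_Ici_self)))
    rwa [show σ (g t) = M by simp [σ]] at this
  have hφσ : ∀ y, φ y - φ (g t) = σ y * (y - g t) := by
    intro y
    by_cases hy : y = g t
    · simp [hy]
    · rw [show σ y = slope φ (g t) y from Function.update_of_ne hy _ _, slope_def_field,
        div_mul_cancel₀ _ (sub_ne_zero.2 hy)]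
  refine diniUpper_le_of_forall_eventually fun ε hε => ?_
  have hε' : 0 < ε / (2 * M) := by positivity
  filter_upwards [eventually_le_of_diniUpper_le h hε', hσ.eventually (eventually_gt_nhds hM),
    (hσ.mul_const (L + ε / (2 * M))).eventually
      (eventually_lt_nhds (lt_add_of_pos_right _ (half_pos hε)))] with s hq hσpos hσL
  have hM' : M * (L + ε / (2 * M)) = M * L + ε / 2 := by field_simp
  calc (φ (g (t + s)) - φ (g t)) / s = σ (g (t + s)) * ((g (t + s) - g t) / s) := by
        rw [hφσ, mul_div_assoc]
    _ ≤ σ (g (t + s)) * (L + ε / (2 * M)) := by gcongr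
    _ ≤ M * L + ε := by linarith

end DiniUpper

lemma strictMonoOn_Ioi_of_hasDerivAt_pos {F F' : ℝ → ℝ} (hF : ∀ q, 0 < q → HasDerivAt F (F' q) q)
    (hF' : ∀ q, 0 < q → 0 < F' q) : StrictMonoOn F (Ioi 0) :=
  strictMonoOn_of_hasDerivWithinAt_pos (convex_Ioi 0)
    (fun q hq => (hF q hq).continuousAt.continuousWithinAt)
    (by simpa using fun q hq => (hF q hq).hasDerivWithinAt) (by simpa using hF')

lemma tendsto_atTop_of_map_le_sub {F α : ℝ → ℝ} {c : ℝ} (hF : MonotoneOn F (Ioi 0))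
    (hα : Tendsto α atTop atTop) (hc : 0 < c) (hFα : ∀ a, 0 < a → F (α a) ≤ F a - c) :
    Tendsto F atTop atTop := by
  have hstep : ∀ n : ℕ, ∃ a, 0 < a ∧ F 1 + n * c ≤ F a := by
    intro n
    induction n with
    | zero => exact ⟨1, one_pos, by simp⟩
    | succ n ih =>
      obtain ⟨a, ha, hFa⟩ := ih
      obtain ⟨b, hab, hb⟩ := ((hα.eventually_ge_atTop a).and (eventually_gt_atTop 0)).exists
      have hFab : F a ≤ F (α b) := hF ha (ha.trans_le hab) hab
      refine ⟨b, hb, ?_⟩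
      push_cast
      linarith [hFα b hb]
  refine tendsto_atTop.2 fun M => ?_
  obtain ⟨n, hn⟩ := exists_nat_ge ((M - F 1) / c)
  obtain ⟨a, ha, hFa⟩ := hstep n
  filter_upwards [eventually_ge_atTop a] with q hq
  rw [div_le_iff₀ hc] at hn
  linarith [hF ha (ha.trans_le hq) hq]

lemma surjOn_Ioi_of_tendsto {F : ℝ → ℝ} (hF : ContinuousOn F (Ioi 0))
    (hbot : Tendsto F (𝓝[>] 0) atBot) (htop : Tendsto F atTop atTop) : SurjOn F (Ioi 0) univ := by
  intro z _
  obtain ⟨a, haz, ha⟩ := ((hbot.eventually_le_atBot z).and self_mem_nhdsWithin).exists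
  obtain ⟨b, hzb, hab⟩ := ((htop.eventually_ge_atTop z).and (eventually_ge_atTop a)).exists
  obtain ⟨q, hq, rfl⟩ := intermediate_value_Icc hab
    (hF.mono fun u hu => mem_Ioi.2 (mem_Ioi.1 ha |>.trans_le hu.1)) ⟨haz, hzb⟩
  exact ⟨q, mem_Ioi.2 (mem_Ioi.1 ha |>.trans_le hq.1), rfl⟩

section IntegralInv

variable {P : ℝ → ℝ}

lemma intervalIntegrable_inv (hPc : ContinuousOn P (Ioi 0)) (hP : ∀ s, 0 < s → 0 < P s)
    {a b : ℝ} (ha : 0 < a) (hb : 0 < b) : IntervalIntegrable (fun s => (P s)⁻¹) volume a b :=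
  ((hPc.inv₀ fun s hs => (hP s hs).ne').mono fun _ hs => (lt_min ha hb).trans_le hs.1)
    |>.intervalIntegrable

lemma hasDerivAt_integral_inv (hPc : ContinuousOn P (Ioi 0)) (hP : ∀ s, 0 < s → 0 < P s)
    {q : ℝ} (hq : 0 < q) : HasDerivAt (fun q => ∫ s in (1 : ℝ)..q, (P s)⁻¹) (P q)⁻¹ q :=
  have hPc' : ContinuousOn (fun s => (P s)⁻¹) (Ioi 0) := hPc.inv₀ fun s hs => (hP s hs).ne'
  intervalIntegral.integral_hasDerivAt_right (intervalIntegrable_inv hPc hP one_pos hq)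
    (hPc'.stronglyMeasurableAtFilter isOpen_Ioi q hq) (hPc'.continuousAt (Ioi_mem_nhds hq))

lemma integral_inv_sub_integral_inv (hPc : ContinuousOn P (Ioi 0)) (hP : ∀ s, 0 < s → 0 < P s)
    {a b : ℝ} (ha : 0 < a) (hb : 0 < b) :
    (∫ s in (1 : ℝ)..b, (P s)⁻¹) - ∫ s in (1 : ℝ)..a, (P s)⁻¹ = ∫ s in a..b, (P s)⁻¹ :=
  intervalIntegral.integral_interval_sub_left (intervalIntegrable_inv hPc hP one_pos hb)
    (intervalIntegrable_inv hPc hP one_pos ha)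

lemma apply_le_sub_of_le_integral_inv {F α : ℝ → ℝ} {c : ℝ} (hPc : ContinuousOn P (Ioi 0))
    (hP : ∀ s, 0 < s → 0 < P s) (hF : ∀ q, F q = ∫ s in (1 : ℝ)..q, (P s)⁻¹)
    (hα : ∀ a, 0 < a → 0 < α a) (hc : ∀ a, 0 < a → c ≤ ∫ s in (α a)..a, (P s)⁻¹)
    {a : ℝ} (ha : 0 < a) : F (α a) ≤ F a - c := by
  rw [hF, hF]
  linarith [integral_inv_sub_integral_inv hPc hP (hα a ha) ha, hc a ha]

lemma tendsto_integral_inv_nhdsGT_zero (hPc : ContinuousOn P (Ioi 0))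
    (hP : ∀ s, 0 < s → 0 < P s) (hdiv : ∫⁻ s in Ioc (0 : ℝ) 1, ENNReal.ofReal ((P s)⁻¹) = ⊤) :
    Tendsto (fun q => ∫ s in (1 : ℝ)..q, (P s)⁻¹) (𝓝[>] 0) atBot := by
  have hmono := (strictMonoOn_Ioi_of_hasDerivAt_pos (fun q hq => hasDerivAt_integral_inv hPc hP hq)
    fun q hq => inv_pos.2 (hP q hq)).monotoneOn
  refine tendsto_atBot.2 fun b => ?_
  obtain ⟨q₀, hq₀, hq₀b⟩ : ∃ q₀, 0 < q₀ ∧ ∫ s in (1 : ℝ)..q₀, (P s)⁻¹ ≤ b := by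
    by_contra! hbdd
    -- otherwise `1 / P` would be integrable on `(0, 1]`
    have hint : IntegrableOn (fun s => (P s)⁻¹) (Ioc 0 1) := by
      refine integrableOn_Ioc_of_intervalIntegral_norm_bounded_left (I := -b)
        (fun n : ℕ => ((intervalIntegrable_inv hPc hP Nat.one_div_pos_of_nat one_pos).1))
        tendsto_one_div_add_atTop_nhds_zero_nat (Eventually.of_forall fun n => ?_)
      have hn : (0 : ℝ) < 1 / (n + 1) := Nat.one_div_pos_of_nat
      have := integral_inv_sub_integral_inv hPc hP hn one_pos
      rw [intervalIntegral.integral_same, intervalIntegral.integral_of_le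
        ((div_le_one (by positivity)).2 (by simp))] at this
      rw [setIntegral_congr_fun measurableSet_Ioc fun s hs =>
        Real.norm_of_nonneg (inv_pos.2 (hP s (hn.trans hs.1))).le]
      linarith [hbdd _ hn]
    exact hint.lintegral_lt_top.ne hdiv
  filter_upwards [Ioo_mem_nhdsGT hq₀] with q hq
  exact (hmono hq.1 hq₀ hq.2.le).trans hq₀b

end IntegralInv

/-- `F` is a time coordinate on `(0, ∞)` for the flow `ẇ = P w`, with inverse `Finv`. -/
structure IsTimeChart (P F Finv : ℝ → ℝ) : Prop where
  pos : ∀ q, 0 < q → 0 < P q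
  hasDerivAt : ∀ q, 0 < q → HasDerivAt F (P q)⁻¹ q
  surjOn : SurjOn F (Ioi 0) univ
  inv_apply : ∀ q, 0 < q → Finv (F q) = q

lemma isTimeChart_of_integral_inv {P F Finv α : ℝ → ℝ} {c : ℝ} (hPc : ContinuousOn P (Ioi 0))
    (hP : ∀ s, 0 < s → 0 < P s) (hdiv : ∫⁻ s in Ioc (0 : ℝ) 1, ENNReal.ofReal ((P s)⁻¹) = ⊤)
    (hF : ∀ q, F q = ∫ s in (1 : ℝ)..q, (P s)⁻¹) (hα : Tendsto α atTop atTop) (hc : 0 < c)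
    (hFα : ∀ a, 0 < a → F (α a) ≤ F a - c) (hinv : ∀ q, 0 < q → Finv (F q) = q) :
    IsTimeChart P F Finv := by
  obtain rfl : F = _ := funext hF
  have hd := fun q (hq : 0 < q) => hasDerivAt_integral_inv hPc hP hq
  have hmono := strictMonoOn_Ioi_of_hasDerivAt_pos hd fun q hq => inv_pos.2 (hP q hq)
  exact ⟨hP, hd, surjOn_Ioi_of_tendsto (fun q hq => (hd q hq).continuousAt.continuousWithinAt)
    (tendsto_integral_inv_nhdsGT_zero hPc hP hdiv)
    (tendsto_atTop_of_map_le_sub hmono.monotoneOn hα hc hFα), hinv⟩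

namespace IsTimeChart

variable {P F Finv : ℝ → ℝ} (hC : IsTimeChart P F Finv)
include hC

lemma strictMonoOn : StrictMonoOn F (Ioi 0) :=
  strictMonoOn_Ioi_of_hasDerivAt_pos hC.hasDerivAt fun q hq => inv_pos.2 (hC.pos q hq)

lemma inv_pos (z : ℝ) : 0 < Finv z := by
  obtain ⟨q, hq, rfl⟩ := hC.surjOn (mem_univ z)
  rwa [hC.inv_apply q hq]

lemma apply_inv (z : ℝ) : F (Finv z) = z := by
  obtain ⟨q, hq, rfl⟩ := hC.surjOn (mem_univ z)
  rw [hC.inv_apply q hq]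

lemma le_inv_iff {q z : ℝ} (hq : 0 < q) : q ≤ Finv z ↔ F q ≤ z := by
  conv_rhs => rw [← hC.apply_inv z]
  exact (hC.strictMonoOn.le_iff_le hq (hC.inv_pos z)).symm

lemma inv_strictMono : StrictMono Finv := fun z z' h =>
  (hC.strictMonoOn.lt_iff_lt (hC.inv_pos z) (hC.inv_pos z')).1 (by rwa [hC.apply_inv, hC.apply_inv])

lemma continuous_inv : Continuous Finv := by
  refine continuous_iff_continuousAt.2 fun z => continuousAt_of_monotoneOn_of_image_mem_nhds
    (hC.inv_strictMono.monotone.monotoneOn univ) univ_mem ?_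
  refine mem_of_superset (Ioi_mem_nhds (hC.inv_pos z)) fun q hq => ?_
  exact ⟨F q, mem_univ _, hC.inv_apply q hq⟩

lemma hasDerivAt_inv (z : ℝ) : HasDerivAt Finv (P (Finv z)) z := by
  simpa using HasDerivAt.of_local_left_inverse hC.continuous_inv.continuousAt
    (hC.hasDerivAt _ (hC.inv_pos z)) (inv_ne_zero (hC.pos _ (hC.inv_pos z)).ne')
    (Eventually.of_forall hC.apply_inv)

end IsTimeChart

/-- The point from which the flow `ẇ = P w` reaches `w` in time `c`, for the time chart `F`;
the equilibrium `0` is fixed. -/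
def flowBack (F Finv : ℝ → ℝ) (c w : ℝ) : ℝ := if w = 0 then 0 else Finv (F w - c)

section FlowBack

variable {P F Finv : ℝ → ℝ} {c c' w w' : ℝ}

@[simp]
lemma flowBack_zero_right (F Finv : ℝ → ℝ) (c : ℝ) : flowBack F Finv c 0 = 0 := if_pos rfl

lemma flowBack_of_pos (hw : 0 < w) : flowBack F Finv c w = Finv (F w - c) := if_neg hw.ne'

namespace IsTimeChart

variable (hC : IsTimeChart P F Finv)
include hC

lemma flowBack_nonneg : 0 ≤ flowBack F Finv c w := by
  unfold flowBack
  split_ifs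
  exacts [le_rfl, (hC.inv_pos _).le]

lemma flowBack_zero_left (hw : 0 ≤ w) : flowBack F Finv 0 w = w := by
  rcases hw.eq_or_lt with rfl | hw
  · exact flowBack_zero_right F Finv 0
  · rw [flowBack_of_pos hw, sub_zero, hC.inv_apply w hw]

lemma flowBack_le_flowBack (hc : c' ≤ c) (hw : 0 ≤ w) (hww : w ≤ w') :
    flowBack F Finv c w ≤ flowBack F Finv c' w' := by
  rcases hw.eq_or_lt with rfl | hw
  · rw [flowBack_zero_right]
    exact hC.flowBack_nonneg
  · have hF := hC.strictMonoOn.monotoneOn hw (hw.trans_le hww) hww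
    rw [flowBack_of_pos hw, flowBack_of_pos (hw.trans_le hww)]
    exact hC.inv_strictMono.monotone (by linarith)

lemma flowBack_le_self (hc : 0 ≤ c) (hw : 0 ≤ w) : flowBack F Finv c w ≤ w :=
  (hC.flowBack_le_flowBack hc hw le_rfl).trans_eq (hC.flowBack_zero_left hw)

lemma le_flowBack_of_apply_le {α : ℝ → ℝ} (hα : ClassK α)
    (hFα : ∀ a, 0 < a → F (α a) ≤ F a - c) (hw : 0 ≤ w) : α w ≤ flowBack F Finv c w := by
  rcases hw.eq_or_lt with rfl | hw
  · rw [hα.2.2, flowBack_zero_right]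
  · rw [flowBack_of_pos hw, hC.le_inv_iff (hα.pos hw)]
    exact hFα w hw

lemma strictMonoOn_flowBack (c : ℝ) : StrictMonoOn (flowBack F Finv c) (Ici 0) := by
  intro a (ha : 0 ≤ a) b _ hab
  have hb : 0 < b := ha.trans_lt hab
  rw [flowBack_of_pos hb]
  rcases ha.eq_or_lt with rfl | ha
  · rw [flowBack_zero_right]
    exact hC.inv_pos _
  · rw [flowBack_of_pos ha]
    exact hC.inv_strictMono (sub_lt_sub_right (hC.strictMonoOn ha hb hab) c)

lemma tendsto_flowBack_atTop (c : ℝ) : Tendsto (flowBack F Finv c) atTop atTop := by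
  refine tendsto_atTop.2 fun M => ?_
  obtain ⟨q, hq, hFq⟩ := hC.surjOn (mem_univ (F (max M 1) + c))
  filter_upwards [eventually_ge_atTop q] with w hw
  have hw' : 0 < w := mem_Ioi.1 hq |>.trans_le hw
  rw [flowBack_of_pos hw']
  refine (le_max_left M 1).trans ((hC.le_inv_iff (by positivity)).2 ?_)
  linarith [hC.strictMonoOn.monotoneOn hq hw' hw]

lemma tendsto_flowBack {ι : Type*} {l : Filter ι} {c w : ι → ℝ} {C W : ℝ}
    (hc : Tendsto c l (𝓝 C)) (hw : Tendsto w l (𝓝 W)) (hW : 0 ≤ W) (hc₀ : ∀ᶠ a in l, 0 ≤ c a)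
    (hw₀ : ∀ᶠ a in l, 0 ≤ w a) :
    Tendsto (fun a => flowBack F Finv (c a) (w a)) l (𝓝 (flowBack F Finv C W)) := by
  rcases hW.eq_or_lt with rfl | hW
  · rw [flowBack_zero_right]
    refine tendsto_of_tendsto_of_tendsto_of_le_of_le' tendsto_const_nhds hw
      (Eventually.of_forall fun _ => hC.flowBack_nonneg) ?_
    filter_upwards [hc₀, hw₀] with a hca hwa using hC.flowBack_le_self hca hwa
  · rw [flowBack_of_pos hW]
    refine (hC.continuous_inv.tendsto _ |>.comp
      (((hC.hasDerivAt W hW).continuousAt.tendsto.comp hw).sub hc)).congr' ?_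
    filter_upwards [hw.eventually (eventually_gt_nhds hW)] with a ha
    exact (flowBack_of_pos ha).symm

lemma flowBack_le_flowBack_ramp {τ : ℕ → ℝ} {i : ℕ} {t : ℝ} (hc : 0 ≤ c) (h₁ : τ i ≤ t)
    (h₂ : t < τ (i + 1)) (hw : 0 ≤ w) (hww : w ≤ w') :
    flowBack F Finv c w ≤ flowBack F Finv (ramp τ i t * c) w' :=
  hC.flowBack_le_flowBack (mul_le_of_le_one_left hc (ramp_lt_one h₁ h₂).le) hw hww

lemma flowBack_ramp_le_self {τ : ℕ → ℝ} {i : ℕ} {t : ℝ} (hc : 0 ≤ c) (h₁ : τ i ≤ t)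
    (h₂ : t < τ (i + 1)) (hw : 0 ≤ w) : flowBack F Finv (ramp τ i t * c) w ≤ w :=
  hC.flowBack_le_self (mul_nonneg (ramp_nonneg h₁ h₂) hc) hw

end IsTimeChart

lemma ClassKInf.flowBack_comp {ψ : ℝ → ℝ} (hψ : ClassKInf ψ) (hC : IsTimeChart P F Finv)
    (hc : 0 ≤ c) : ClassKInf (fun s => flowBack F Finv c (ψ s)) := by
  refine ⟨⟨fun s hs => ?_, fun a ha b hb hab => ?_, by simp [hψ.1.2.2]⟩,
    (hC.tendsto_flowBack_atTop c).comp hψ.2⟩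
  · exact hC.tendsto_flowBack tendsto_const_nhds (hψ.1.1 s hs) (hψ.1.nonneg hs)
      (Eventually.of_forall fun _ => hc) (eventually_mem_nhdsWithin.mono fun u hu => hψ.1.nonneg hu)
  · exact hC.strictMonoOn_flowBack c (hψ.1.nonneg ha) (hψ.1.nonneg hb) (hψ.1.2.1 ha hb hab)

end FlowBack

def IsRampedFlowBack (F Finv : ℝ → ℝ) (τ : ℕ → ℝ) (c : ℝ) (w v : ℝ → ℝ) : Prop :=
  ∀ i t, τ i ≤ t → t < τ (i + 1) → v t = flowBack F Finv (ramp τ i t * c) (w t)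

lemma ImpulsiveRegular.leftLim_nonneg {t₀ : ℝ} {τ : ℕ → ℝ} {w : ℝ → ℝ}
    (hw : ImpulsiveRegular t₀ τ w) (hw₀ : ∀ t, 0 ≤ w t) {i : ℕ} (hi : 1 ≤ i) :
    0 ≤ Function.leftLim w (τ i) := by
  obtain ⟨L, hL⟩ := hw.2.2 i hi
  rw [leftLim_eq_of_tendsto hL]
  exact ge_of_tendsto' hL hw₀

namespace IsRampedFlowBack

variable {P F Finv : ℝ → ℝ} {τ : ℕ → ℝ} {c t₀ : ℝ} {w v : ℝ → ℝ}

lemma tendsto (hv : IsRampedFlowBack F Finv τ c w v) (hC : IsTimeChart P F Finv) (hc : 0 ≤ c)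
    (hw₀ : ∀ t, 0 ≤ w t) {i : ℕ} {S : Set ℝ} {s W : ℝ}
    (hS : ∀ᶠ u in 𝓝[S] s, τ i ≤ u ∧ u < τ (i + 1)) (hw : Tendsto w (𝓝[S] s) (𝓝 W)) (hW : 0 ≤ W) :
    Tendsto v (𝓝[S] s) (𝓝 (flowBack F Finv (ramp τ i s * c) W)) := by
  refine (hC.tendsto_flowBack ((((continuous_ramp τ i).tendsto s).mono_left
    nhdsWithin_le_nhds).mul_const c) hw hW ?_ (Eventually.of_forall hw₀)).congr' ?_
  · filter_upwards [hS] with u hu using mul_nonneg (ramp_nonneg hu.1 hu.2) hc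
  · filter_upwards [hS] with u hu using (hv i u hu.1 hu.2).symm

lemma tendsto_nhdsLT (hv : IsRampedFlowBack F Finv τ c w v) (hC : IsTimeChart P F Finv)
    (hc : 0 ≤ c) (hw₀ : ∀ t, 0 ≤ w t) (hτ : StrictMono τ) {i : ℕ} {L : ℝ}
    (hw : Tendsto w (𝓝[<] τ (i + 1)) (𝓝 L)) :
    Tendsto v (𝓝[<] τ (i + 1)) (𝓝 (flowBack F Finv c L)) := by
  have hτi : τ i < τ (i + 1) := hτ i.lt_succ_self
  have hS : ∀ᶠ u in 𝓝[<] τ (i + 1), τ i ≤ u ∧ u < τ (i + 1) := by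
    filter_upwards [Ioo_mem_nhdsLT hτi] with u hu using ⟨hu.1.le, hu.2⟩
  simpa [ramp_succ hτi] using hv.tendsto hC hc hw₀ hS hw (ge_of_tendsto' hw hw₀)

lemma leftLim_eq (hv : IsRampedFlowBack F Finv τ c w v) (hC : IsTimeChart P F Finv)
    (hc : 0 ≤ c) (hw₀ : ∀ t, 0 ≤ w t) (hτ : StrictMono τ) (hw : ImpulsiveRegular t₀ τ w)
    {i : ℕ} (hi : 1 ≤ i) :
    Function.leftLim v (τ i) = flowBack F Finv c (Function.leftLim w (τ i)) := by
  obtain ⟨j, rfl⟩ : ∃ j, i = j + 1 := ⟨i - 1, by omega⟩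
  obtain ⟨L, hL⟩ := hw.2.2 (j + 1) hi
  rw [leftLim_eq_of_tendsto hL, leftLim_eq_of_tendsto (hv.tendsto_nhdsLT hC hc hw₀ hτ hL)]

lemma apply_impulse (hv : IsRampedFlowBack F Finv τ c w v) (hC : IsTimeChart P F Finv)
    (hw₀ : ∀ t, 0 ≤ w t) (hτ : StrictMono τ) (i : ℕ) : v (τ i) = w (τ i) := by
  rw [hv i _ le_rfl (hτ i.lt_succ_self), ramp_self, zero_mul, hC.flowBack_zero_left (hw₀ _)]

lemma impulsiveRegular (hv : IsRampedFlowBack F Finv τ c w v) (hC : IsTimeChart P F Finv)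
    (hc : 0 ≤ c) (hw₀ : ∀ t, 0 ≤ w t) (hτ : IsImpulseSeq t₀ τ) (hw : ImpulsiveRegular t₀ τ w) :
    ImpulsiveRegular t₀ τ v := by
  refine ⟨fun t ht => ?_, fun t ht htS => ?_, fun i hi => ?_⟩
  · obtain ⟨i, hi, hi'⟩ := hτ.exists_mem_Ico ht
    have hS : ∀ᶠ u in 𝓝[≥] t, τ i ≤ u ∧ u < τ (i + 1) := by
      filter_upwards [Ico_mem_nhdsGE hi'] with u hu using ⟨hi.trans hu.1, hu.2⟩
    simpa only [ContinuousWithinAt, hv i t hi hi'] using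
      hv.tendsto hC hc hw₀ hS (hw.1 t ht) (hw₀ t)
  · obtain ⟨i, hi, hi'⟩ := hτ.exists_mem_Ico ht
    have hS : ∀ᶠ u in 𝓝[Ici t₀] t, τ i ≤ u ∧ u < τ (i + 1) := by
      rcases hi.eq_or_lt with h | h
      · obtain rfl : i = 0 := by
          by_contra h0
          exact htS ⟨i, Nat.one_le_iff_ne_zero.2 h0, h⟩
        filter_upwards [self_mem_nhdsWithin, nhdsWithin_le_nhds (Iio_mem_nhds hi')] with u hu hu'
        exact ⟨hτ.1 ▸ hu, hu'⟩
      · filter_upwards [nhdsWithin_le_nhds (Ioo_mem_nhds h hi')] with u hu using ⟨hu.1.le, hu.2⟩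
    simpa only [ContinuousWithinAt, hv i t hi hi'] using
      hv.tendsto hC hc hw₀ hS (hw.2.1 t ht htS) (hw₀ t)
  · obtain ⟨j, rfl⟩ : ∃ j, i = j + 1 := ⟨i - 1, by omega⟩
    obtain ⟨L, hL⟩ := hw.2.2 (j + 1) hi
    exact ⟨_, hv.tendsto_nhdsLT hC hc hw₀ hτ.2.1 hL⟩

lemma diniUpper_le (hv : IsRampedFlowBack F Finv τ c w v) (hC : IsTimeChart P F Finv)
    (hP₀ : P 0 = 0) (hc : 0 ≤ c) (hw₀ : ∀ t, 0 ≤ w t) {i : ℕ} {t : ℝ} (hi : τ i ≤ t)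
    (hi' : t < τ (i + 1)) (hwc : ContinuousWithinAt w (Ici t) t)
    (hw : DiniUpper w t ≤ (P (w t) : EReal)) :
    DiniUpper v t ≤ (P (v t) * (1 - c / (τ (i + 1) - τ i)) : ℝ) := by
  have hnear : ∀ᶠ u in 𝓝[>] t, τ i ≤ u ∧ u < τ (i + 1) := by
    filter_upwards [Ioo_mem_nhdsGT hi'] with u hu using ⟨hi.trans hu.1.le, hu.2⟩
  rcases (hw₀ t).eq_or_lt with hwt | hwt
  · have hvt : v t = 0 := by rw [hv i t hi hi', ← hwt, flowBack_zero_right]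
    calc DiniUpper v t ≤ DiniUpper w t := by
          refine diniUpper_le_diniUpper (hvt.trans hwt) ?_
          filter_upwards [hnear] with u hu
          rw [hv i u hu.1 hu.2]
          exact hC.flowBack_ramp_le_self hc hu.1 hu.2 (hw₀ u)
      _ ≤ _ := hw
      _ = _ := by rw [hvt, ← hwt, hP₀, zero_mul]
  · set g : ℝ → ℝ := fun u => F (w u) - ramp τ i u * c
    have hvt : v t = Finv (g t) := by rw [hv i t hi hi', flowBack_of_pos hwt]
    have hFw := (hC.hasDerivAt _ hwt).diniUpper_comp_le (inv_pos.2 (hC.pos _ hwt)) hwc hw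
    rw [inv_mul_cancel₀ (hC.pos _ hwt).ne'] at hFw
    have hgc : ContinuousWithinAt g (Ici t) t :=
      ((hC.hasDerivAt _ hwt).continuousAt.comp_continuousWithinAt hwc).sub
        ((continuous_ramp τ i).mul continuous_const).continuousWithinAt
    have hvg : ∀ᶠ u in 𝓝[>] t, v u ≤ Finv (g u) := by
      filter_upwards [hnear, (hwc.mono Ioi_subset_Ici_self).eventually (eventually_gt_nhds hwt)]
        with u hu hwu
      rw [hv i u hu.1 hu.2, flowBack_of_pos hwu]
    calc DiniUpper v t ≤ DiniUpper (fun u => Finv (g u)) t := diniUpper_le_diniUpper hvt hvg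
      _ ≤ _ := (hC.hasDerivAt_inv (g t)).diniUpper_comp_le (hC.pos _ (hC.inv_pos _)) hgc
          (diniUpper_sub_le hFw (hasDerivAt_ramp_mul τ i t c))
      _ = _ := by rw [hvt]

end IsRampedFlowBack

universe u

theorem constructionUnstableFlow_general
    (ρ : ℝ → ℝ) (hρ : ClassP (fun s => -ρ s))
    (hdiv : ∫⁻ s in Set.Ioc (0:ℝ) 1, ENNReal.ofReal ((-ρ s)⁻¹) = ⊤)
    (α : ℝ → ℝ) (hα : ClassKInf α)
    (θ δ : ℝ) (hθ : 0 < θ) (hδ : 0 < δ)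
    (hjumpint : ∀ a, 0 < a → θ + δ ≤ ∫ s in (α a)..a, (-ρ s)⁻¹)
    (Ftil Finv : ℝ → ℝ)
    (hFtil : ∀ q, Ftil q = ∫ s in (1:ℝ)..q, (-ρ s)⁻¹)
    (hFinv : ∀ q, 0 < q → Finv (Ftil q) = q)
    (ψ₁ ψ₂ η : ℝ → ℝ) (hψ₁ : ClassKInf ψ₁) (hψ₂ : ClassKInf ψ₂)
    (ψ₃ : ℝ → ℝ)
    (X : Type u) [NormedAddCommGroup X]
    (t₀ : ℝ) (τ : ℕ → ℝ) (hτ : IsImpulseSeq t₀ τ)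
    (hdwell : ∀ i : ℕ, τ (i + 1) - τ i ≤ θ)
    (r : ℝ)
    (Vc : X → ℝ)
    (hVcb : ∀ y : X, ψ₁ ‖y‖ ≤ Vc y ∧ Vc y ≤ ψ₂ ‖y‖)
    (x : ℝ → X)
    (hreg : ImpulsiveRegular t₀ τ (fun t => Vc (x t)))
    (hflow : ∀ t, t₀ ≤ t → t ∉ impulseSet τ → η r ≤ Vc (x t) →
      DiniUpper (fun s => Vc (x s)) t ≤ (((-ρ (Vc (x t))) : ℝ) : EReal))
    (hjump : ∀ i : ℕ, 1 ≤ i → η r ≤ Function.leftLim (fun s => Vc (x s)) (τ i) →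
      Vc (x (τ i)) ≤ α (Function.leftLim (fun s => Vc (x s)) (τ i)))
    (hjumpsmall : ∀ i : ℕ, 1 ≤ i → Function.leftLim (fun s => Vc (x s)) (τ i) < η r →
      Vc (x (τ i)) ≤ ψ₃ r)
    (V : ℝ → X → ℝ)
    (hVdef : ∀ i : ℕ, ∀ t, τ i ≤ t → t < τ (i + 1) → ∀ y : X,
      V t y = if Vc y = 0 then 0
        else Finv (Ftil (Vc y) - ((t - τ i) / (τ (i + 1) - τ i)) * (θ + δ))) :
    -- (i) sandwich bounds by class 𝒦∞ functions of the norm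
    (∃ α₁ α₂ : ℝ → ℝ, ClassKInf α₁ ∧ ClassKInf α₂ ∧
      ∀ t, t₀ ≤ t → ∀ y : X, α₁ ‖y‖ ≤ V t y ∧ V t y ≤ α₂ ‖y‖) ∧
    -- the map t ↦ V(t, x(t)) is impulsive-regular
    ImpulsiveRegular t₀ τ (fun t => V t (x t)) ∧
    -- (ii) strict decay along the flow outside the perturbation radius
    (∀ t, t₀ ≤ t → t ∉ impulseSet τ → η r ≤ V t (x t) →
      DiniUpper (fun s => V s (x s)) t ≤ (((-(δ / θ * (-ρ (V t (x t))))) : ℝ) : EReal)) ∧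
    -- (ii) non-increase at jumps outside the perturbation radius
    (∀ i : ℕ, 1 ≤ i → η r ≤ Function.leftLim (fun s => V s (x s)) (τ i) →
      V (τ i) (x (τ i)) ≤ Function.leftLim (fun s => V s (x s)) (τ i)) ∧
    -- (iii) bound at jumps inside the perturbation radius
    (∀ i : ℕ, 1 ≤ i → Function.leftLim (fun s => V s (x s)) (τ i) < η r →
      V (τ i) (x (τ i)) ≤ max (ψ₃ r) (η r)) := by
  have hPc : ContinuousOn (fun s => -ρ s) (Ioi 0) := hρ.1.mono Ioi_subset_Ici_self
  have hθδ : 0 < θ + δ := add_pos hθ hδ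
  have hFα : ∀ a, 0 < a → Ftil (α a) ≤ Ftil a - (θ + δ) := fun a =>
    apply_le_sub_of_le_integral_inv hPc hρ.2.2 hFtil (fun a => hα.1.pos) hjumpint
  have hC : IsTimeChart (fun s => -ρ s) Ftil Finv :=
    isTimeChart_of_integral_inv hPc hρ.2.2 hdiv hFtil hα.2 hθδ hFα hFinv
  have hVc₀ : ∀ y, 0 ≤ Vc y := fun y => (hψ₁.1.nonneg (norm_nonneg y)).trans (hVcb y).1
  have hV : ∀ i t, τ i ≤ t → t < τ (i + 1) → ∀ y,
      V t y = flowBack Ftil Finv (ramp τ i t * (θ + δ)) (Vc y) := hVdef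
  have hv : IsRampedFlowBack Ftil Finv τ (θ + δ) (fun t => Vc (x t)) (fun t => V t (x t)) :=
    fun i t hi hi' => hV i t hi hi' (x t)
  have hw₀ : ∀ t, 0 ≤ Vc (x t) := fun t => hVc₀ (x t)
  have hvL := fun i (hi : 1 ≤ i) => hv.leftLim_eq hC hθδ.le hw₀ hτ.2.1 hreg hi
  have hjump_flowBack := fun i hi hL => (hjump i hi hL).trans
    (hC.le_flowBack_of_apply_le hα.1 hFα (hreg.leftLim_nonneg hw₀ hi))
  refine ⟨⟨_, ψ₂, hψ₁.flowBack_comp hC hθδ.le, hψ₂, fun t ht y => ?_⟩,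
    hv.impulsiveRegular hC hθδ.le hw₀ hτ hreg, fun t ht htS hηv => ?_, fun i hi hηv => ?_,
    fun i hi hvη => ?_⟩
  · obtain ⟨i, hi, hi'⟩ := hτ.exists_mem_Ico ht
    rw [hV i t hi hi' y]
    exact ⟨hC.flowBack_le_flowBack_ramp hθδ.le hi hi' (hψ₁.1.nonneg (norm_nonneg y)) (hVcb y).1,
      (hC.flowBack_ramp_le_self hθδ.le hi hi' (hVc₀ y)).trans (hVcb y).2⟩
  · obtain ⟨i, hi, hi'⟩ := hτ.exists_mem_Ico ht
    have hvw := (hV i t hi hi' (x t)).trans_le (hC.flowBack_ramp_le_self hθδ.le hi hi' (hw₀ t))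
    refine (hv.diniUpper_le hC hρ.2.1 hθδ.le hw₀ hi hi' (hreg.1 t ht)
      (hflow t ht htS (hηv.trans hvw))).trans (EReal.coe_le_coe_iff.2 ?_)
    have hrate := one_sub_div_le_neg_div hθ hθδ.le (sub_pos.2 (hτ.2.1 i.lt_succ_self)) (hdwell i)
    have hPv := hρ.nonneg ((hV i t hi hi' (x t)).symm ▸ hC.flowBack_nonneg)
    nlinarith
  · rw [hvL i hi] at hηv
    rw [hv.apply_impulse hC hw₀ hτ.2.1, hvL i hi]
    exact hjump_flowBack i hi (hηv.trans (hC.flowBack_le_self hθδ.le (hreg.leftLim_nonneg hw₀ hi)))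
  · rw [hvL i hi] at hvη
    rw [hv.apply_impulse hC hw₀ hτ.2.1]
    rcases lt_or_ge (Function.leftLim (fun s => Vc (x s)) (τ i)) (η r) with hL | hL
    · exact (hjumpsmall i hi hL).trans (le_max_left _ _)
    · exact ((hjump_flowBack i hi hL).trans hvη.le).trans (le_max_right _ _)

/-- construction of a time-varying ISS-Lyapunov function for unstable flows and
stable jumps: `V(t,y) = F̃⁻¹(F̃(V_cand(y)) − ((t − tᵢ)/(t_{i+1} − tᵢ))(θ + δ))` on
`[tᵢ, t_{i+1})` (and `0` when `V_cand(y) = 0`), where `F̃(q) = ∫₁^q ds/(−ρ(s))`. -/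
theorem constructionUnstableFlow
    (ρ : ℝ → ℝ) (hρ : ClassP (fun s => -ρ s))
    (hdiv : ∫⁻ s in Set.Ioc (0:ℝ) 1, ENNReal.ofReal ((-ρ s)⁻¹) = ⊤)
    (α : ℝ → ℝ) (hα : ClassKInf α)
    (θ δ : ℝ) (hθ : 0 < θ) (hδ : 0 < δ)
    (hjumpint : ∀ a, 0 < a → θ + δ ≤ ∫ s in (α a)..a, (-ρ s)⁻¹)
    (Ftil Finv : ℝ → ℝ)
    (hFtil : ∀ q, Ftil q = ∫ s in (1:ℝ)..q, (-ρ s)⁻¹)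
    (hFinv : ∀ q, 0 < q → Finv (Ftil q) = q)
    (ψ₁ ψ₂ η : ℝ → ℝ) (hψ₁ : ClassKInf ψ₁) (hψ₂ : ClassKInf ψ₂) (hη : ClassKInf η)
    (ψ₃ : ℝ → ℝ) (hψ₃ : ClassK ψ₃)
    (X : Type u) [NormedAddCommGroup X] [NormedSpace ℝ X]
    (t₀ : ℝ) (τ : ℕ → ℝ) (hτ : IsImpulseSeq t₀ τ)
    (hdwell : ∀ i : ℕ, τ (i + 1) - τ i ≤ θ)
    (r : ℝ) (hr : 0 ≤ r)
    (Vc : X → ℝ) (hVccont : Continuous Vc)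
    (hVcb : ∀ y : X, ψ₁ ‖y‖ ≤ Vc y ∧ Vc y ≤ ψ₂ ‖y‖)
    (x : ℝ → X)
    (hreg : ImpulsiveRegular t₀ τ (fun t => Vc (x t)))
    (hflow : ∀ t, t₀ ≤ t → t ∉ impulseSet τ → η r ≤ Vc (x t) →
      DiniUpper (fun s => Vc (x s)) t ≤ (((-ρ (Vc (x t))) : ℝ) : EReal))
    (hjump : ∀ i : ℕ, 1 ≤ i → η r ≤ Function.leftLim (fun s => Vc (x s)) (τ i) →
      Vc (x (τ i)) ≤ α (Function.leftLim (fun s => Vc (x s)) (τ i)))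
    (hjumpsmall : ∀ i : ℕ, 1 ≤ i → Function.leftLim (fun s => Vc (x s)) (τ i) < η r →
      Vc (x (τ i)) ≤ ψ₃ r)
    (V : ℝ → X → ℝ)
    (hVdef : ∀ i : ℕ, ∀ t, τ i ≤ t → t < τ (i + 1) → ∀ y : X,
      V t y = if Vc y = 0 then 0
        else Finv (Ftil (Vc y) - ((t - τ i) / (τ (i + 1) - τ i)) * (θ + δ))) :
    -- (i) sandwich bounds by class 𝒦∞ functions of the norm
    (∃ α₁ α₂ : ℝ → ℝ, ClassKInf α₁ ∧ ClassKInf α₂ ∧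
      ∀ t, t₀ ≤ t → ∀ y : X, α₁ ‖y‖ ≤ V t y ∧ V t y ≤ α₂ ‖y‖) ∧
    -- the map t ↦ V(t, x(t)) is impulsive-regular
    ImpulsiveRegular t₀ τ (fun t => V t (x t)) ∧
    -- (ii) strict decay along the flow outside the perturbation radius
    (∀ t, t₀ ≤ t → t ∉ impulseSet τ → η r ≤ V t (x t) →
      DiniUpper (fun s => V s (x s)) t ≤ (((-(δ / θ * (-ρ (V t (x t))))) : ℝ) : EReal)) ∧
    -- (ii) non-increase at jumps outside the perturbation radius
    (∀ i : ℕ, 1 ≤ i → η r ≤ Function.leftLim (fun s => V s (x s)) (τ i) →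
      V (τ i) (x (τ i)) ≤ Function.leftLim (fun s => V s (x s)) (τ i)) ∧
    -- (iii) bound at jumps inside the perturbation radius
    (∀ i : ℕ, 1 ≤ i → Function.leftLim (fun s => V s (x s)) (τ i) < η r →
      V (τ i) (x (τ i)) ≤ max (ψ₃ r) (η r)) :=
  constructionUnstableFlow_general ρ hρ hdiv α hα θ δ hθ hδ hjumpint Ftil Finv hFtil hFinv ψ₁ ψ₂ η
    hψ₁ hψ₂ ψ₃ X t₀ τ hτ hdwell r Vc hVcb x hreg hflow hjump hjumpsmall V hVdef
end
end
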